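/- arXiv:2402.09831 — 5 statements merged into one kernel-verified Lean document; each statement's English description precedes it below -/
import Mathlib

section
/- Let T ⊆ ℝ^p be a closed cone (not necessarily convex) and let N = {v : ⟨w, v⟩ ≤ 0 for all w ∈ T} be its polar cone. Then for any x ∈ ℝ^p and any z that is a nearest point of x in T, one has ‖z‖ ≤ dist(x, N). -/
/-!
Since the cone contains the segment `[0, 2z]`, a nearest point `z` of `x` in it is also nearest in
that convex segment, and the variational inequality at its two endpoints gives `⟪x - z, z⟫ = 0`.
Hence for `v` in the polar cone, `‖z‖² = ⟪x, z⟫ ≤ ⟪x - v, z⟫ ≤ ‖x - v‖ ‖z‖`.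
-/

open scoped RealInnerProductSpace

section

variable {F : Type*} [NormedAddCommGroup F] [InnerProductSpace ℝ F]

theorem inner_sub_nearest_self_eq_zero_of_isCone {T : Set F}
    (hTcone : ∀ c : ℝ, 0 ≤ c → ∀ w ∈ T, c • w ∈ T) {x z : F} (hz : z ∈ T)
    (hnear : ∀ y ∈ T, ‖x - z‖ ≤ ‖x - y‖) :
    ⟪x - z, z⟫ = 0 := by
  set K := segment ℝ (0 : F) ((2 : ℝ) • z)
  have hKT : K ⊆ T := by
    rintro _ ⟨a, b, -, hb, -, -, rfl⟩
    simpa [smul_smul] using hTcone (b * 2) (by positivity) z hz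
  have hzK : z ∈ K := ⟨1 / 2, 1 / 2, by norm_num, by norm_num, by norm_num, by module⟩
  have : Nonempty K := ⟨⟨z, hzK⟩⟩
  have hnearK : ‖x - z‖ = ⨅ w : K, ‖x - w‖ :=
    le_antisymm (le_ciInf fun w ↦ hnear w (hKT w.2))
      (ciInf_le ⟨0, Set.forall_mem_range.2 fun w : K ↦ norm_nonneg (x - w)⟩ (⟨z, hzK⟩ : K))
  have hvar := (norm_eq_iInf_iff_real_inner_le_zero (convex_segment _ _) hzK).1 hnearK
  have h₀ := hvar 0 (left_mem_segment ℝ _ _)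
  have h₂ := hvar _ (right_mem_segment ℝ _ _)
  rw [zero_sub, inner_neg_right] at h₀
  rw [two_smul, add_sub_cancel_right] at h₂
  linarith

theorem norm_le_norm_sub_of_inner_sub_self_eq_zero {x z v : F} (horth : ⟪x - z, z⟫ = 0)
    (hv : ⟪z, v⟫ ≤ 0) : ‖z‖ ≤ ‖x - v‖ := by
  have hsq : ‖z‖ ^ 2 ≤ ‖x - v‖ * ‖z‖ :=
    calc ‖z‖ ^ 2 = ⟪x, z⟫ := by
          rw [inner_sub_left, real_inner_self_eq_norm_sq] at horth; linarith
      _ ≤ ⟪x - v, z⟫ := by rw [inner_sub_left, real_inner_comm z v]; linarith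
      _ ≤ ‖x - v‖ * ‖z‖ := real_inner_le_norm _ _
  nlinarith [norm_nonneg z, norm_nonneg (x - v)]

end

theorem stmt0_general {p : ℕ} (T : Set (EuclideanSpace ℝ (Fin p)))
    (hTcone : ∀ c : ℝ, 0 ≤ c → ∀ w ∈ T, c • w ∈ T)
    (N : Set (EuclideanSpace ℝ (Fin p)))
    (hN : N = {v | ∀ w ∈ T, ⟪w, v⟫ ≤ 0})
    (x z : EuclideanSpace ℝ (Fin p)) (hz : z ∈ T)
    (hnear : ∀ y ∈ T, ‖x - z‖ ≤ ‖x - y‖) :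
    ‖z‖ ≤ Metric.infDist x N := by
  have horth := inner_sub_nearest_self_eq_zero_of_isCone hTcone hz hnear
  have h0N : (0 : EuclideanSpace ℝ (Fin p)) ∈ N := by simp [hN]
  refine (Metric.le_infDist ⟨0, h0N⟩).2 fun v hv ↦ ?_
  rw [hN] at hv
  rw [dist_eq_norm]
  exact norm_le_norm_sub_of_inner_sub_self_eq_zero horth (hv z hz)

theorem stmt0 {p : ℕ} (T : Set (EuclideanSpace ℝ (Fin p)))
    (hTclosed : IsClosed T)
    (hTcone : ∀ c : ℝ, 0 ≤ c → ∀ w ∈ T, c • w ∈ T)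
    (N : Set (EuclideanSpace ℝ (Fin p)))
    (hN : N = {v | ∀ w ∈ T, ⟪w, v⟫ ≤ 0})
    (x z : EuclideanSpace ℝ (Fin p)) (hz : z ∈ T)
    (hnear : ∀ y ∈ T, ‖x - z‖ ≤ ‖x - y‖) :
    ‖z‖ ≤ Metric.infDist x N :=
  stmt0_general T hTcone N hN x z hz hnear
end

section
/- Let f : ℝ^p → ℝ be C¹ with (1−δ)-Lipschitz gradient and g lower semicontinuous. If x̄ ∈ prox_g(x̄ − ∇f(x̄)), then for all y ∈ ℝ^p: f(y) + g(y) ≥ f(x̄) + g(x̄) − ‖y − x̄‖². -/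
open InnerProductSpace intervalIntegral

lemma descent {p : ℕ} (L : ℝ) (hL : 0 ≤ L) (f : EuclideanSpace ℝ (Fin p) → ℝ)
    (hf : ContDiff ℝ 1 f)
    (hlip : ∀ a b, ‖gradient f a - gradient f b‖ ≤ L * ‖a - b‖)
    (x y : EuclideanSpace ℝ (Fin p)) :
    f x + ⟪gradient f x, y - x⟫_ℝ - L / 2 * ‖y - x‖ ^ 2 ≤ f y := by
  set v := y - x with hv
  set γ : ℝ → EuclideanSpace ℝ (Fin p) := fun t => x + t • v with hγdef
  have hγ : ∀ t : ℝ, HasDerivAt γ v t := by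
    intro t
    have h0 := ((hasDerivAt_id t).smul_const v).const_add x
    rw [one_smul] at h0
    exact h0
  have hgradc : Continuous (gradient f) := by
    have : LipschitzWith ⟨L, hL⟩ (gradient f) := by
      apply LipschitzWith.of_dist_le_mul
      intro a b
      exact (by simpa [dist_eq_norm] using hlip a b : dist (gradient f a) (gradient f b) ≤ L * dist a b)
    exact this.continuous
  have hd : ∀ t : ℝ, HasDerivAt (fun t => f (γ t)) ⟪gradient f (γ t), v⟫_ℝ t := by
    intro t
    have hg : HasGradientAt f (gradient f (γ t)) (γ t) :=
      (hf.differentiable one_ne_zero (γ t)).hasGradientAt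
    have := hg.hasFDerivAt.comp_hasDerivAt t (hγ t)
    simp only [toDual_apply_apply] at this ⊢
    rw [← InnerProductSpace.toDual_apply_apply, ← hg.hasFDerivAt.fderiv] at *
    exact this
  have hcont : Continuous fun t => ⟪gradient f (γ t), v⟫_ℝ := by
    exact Continuous.inner (hgradc.comp (by continuity)) continuous_const
  have key : ∫ t in (0:ℝ)..1, ⟪gradient f (γ t), v⟫_ℝ = f y - f x := by
    have := intervalIntegral.integral_eq_sub_of_hasDerivAt
      (f := fun t => f (γ t)) (fun t _ => hd t)
      (hcont.intervalIntegrable 0 1)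
    simpa [hγdef, hv] using this
  have hmono : ∫ t in (0:ℝ)..1, (⟪gradient f x, v⟫_ℝ - L * ‖v‖ ^ 2 * t)
      ≤ ∫ t in (0:ℝ)..1, ⟪gradient f (γ t), v⟫_ℝ := by
    apply intervalIntegral.integral_mono_on zero_le_one
    · exact (Continuous.intervalIntegrable (by continuity) 0 1)
    · exact hcont.intervalIntegrable 0 1
    · intro t ht
      have h1 : ⟪gradient f x - gradient f (γ t), v⟫_ℝ ≤ L * ‖v‖ ^ 2 * t := by
        calc ⟪gradient f x - gradient f (γ t), v⟫_ℝ
            ≤ ‖gradient f x - gradient f (γ t)‖ * ‖v‖ := real_inner_le_norm _ _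
          _ ≤ (L * ‖x - γ t‖) * ‖v‖ := by
              exact mul_le_mul_of_nonneg_right (hlip x (γ t)) (norm_nonneg _)
          _ = L * ‖v‖ ^ 2 * t := by
              have : x - γ t = -(t • v) := by simp [hγdef]
              rw [this, norm_neg, norm_smul]
              have ht0 : (0:ℝ) ≤ t := ht.1
              simp [Real.norm_eq_abs, abs_of_nonneg ht0]
              ring
      have h2 : ⟪gradient f x, v⟫_ℝ - ⟪gradient f (γ t), v⟫_ℝ
          = ⟪gradient f x - gradient f (γ t), v⟫_ℝ := (inner_sub_left _ _ _).symm
      linarith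
  have hcompute : ∫ t in (0:ℝ)..1, (⟪gradient f x, v⟫_ℝ - L * ‖v‖ ^ 2 * t)
      = ⟪gradient f x, v⟫_ℝ - L * ‖v‖ ^ 2 / 2 := by
    rw [intervalIntegral.integral_sub intervalIntegrable_const
      ((by fun_prop : Continuous fun t : ℝ => L * ‖v‖ ^ 2 * t).intervalIntegrable 0 1),
      intervalIntegral.integral_const_mul, integral_id]
    simp
    ring
  rw [hcompute, key] at hmono
  nlinarith [hmono]

/-- The proximal map of an extended-real-valued function. -/
def proxSet {p : ℕ} (g : EuclideanSpace ℝ (Fin p) → EReal)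
    (x : EuclideanSpace ℝ (Fin p)) : Set (EuclideanSpace ℝ (Fin p)) :=
  {y | ∀ w, g y + ((1 / 2 * ‖y - x‖ ^ 2 : ℝ) : EReal)
        ≤ g w + ((1 / 2 * ‖w - x‖ ^ 2 : ℝ) : EReal)}

/-- Quadratic global lower estimate at a fixed point of the proximal gradient map. -/
theorem stmt8 {p : ℕ} (δ : ℝ) (hδ0 : 0 < δ) (hδ1 : δ < 1)
    (f : EuclideanSpace ℝ (Fin p) → ℝ) (hf : ContDiff ℝ 1 f)
    (hlip : ∀ a b, ‖gradient f a - gradient f b‖ ≤ (1 - δ) * ‖a - b‖)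
    (g : EuclideanSpace ℝ (Fin p) → EReal)
    (hlsc : LowerSemicontinuous g)
    (xb : EuclideanSpace ℝ (Fin p))
    (hfix : xb ∈ proxSet g (xb - gradient f xb)) :
    ∀ y, (f xb : EReal) + g xb
      ≤ (f y : EReal) + g y + ((‖y - xb‖ ^ 2 : ℝ) : EReal) := by
  intro y
  have hfy := hfix y
  have hdes := descent (1 - δ) (by linarith) f hf hlip xb y
  set G := gradient f xb with hG
  set v := y - xb with hv
  have e1 : xb - (xb - G) = G := by abel
  have e2 : y - (xb - G) = v + G := by rw [hv]; abel
  rw [e1, e2] at hfy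
  have hreal : (1 / 2 * ‖v + G‖ ^ 2 : ℝ) + (f xb - 1 / 2 * ‖G‖ ^ 2) ≤ f y + ‖v‖ ^ 2 := by
    have hc : (‖v + G‖ ^ 2 : ℝ) = ‖v‖ ^ 2 + 2 * ⟪v, G⟫_ℝ + ‖G‖ ^ 2 := norm_add_sq_real v G
    have hcomm : ⟪v, G⟫_ℝ = ⟪G, v⟫_ℝ := real_inner_comm _ _
    nlinarith [sq_nonneg ‖v‖]
  have h1 : (f xb : EReal) + g xb
      = (g xb + ((1 / 2 * ‖G‖ ^ 2 : ℝ) : EReal)) + ((f xb - 1 / 2 * ‖G‖ ^ 2 : ℝ) : EReal) := by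
    have hr : (1 / 2 * ‖G‖ ^ 2 + (f xb - 1 / 2 * ‖G‖ ^ 2) : ℝ) = f xb := by ring
    rw [add_assoc, ← EReal.coe_add, hr, add_comm]
  have h2 : (g y + ((1 / 2 * ‖v + G‖ ^ 2 : ℝ) : EReal)) + ((f xb - 1 / 2 * ‖G‖ ^ 2 : ℝ) : EReal)
      ≤ (f y : EReal) + g y + ((‖v‖ ^ 2 : ℝ) : EReal) := by
    rw [add_assoc, ← EReal.coe_add]
    have : ((f y : ℝ) + ‖v‖ ^ 2 : ℝ) = f y + ‖v‖ ^ 2 := rfl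
    calc g y + ((1 / 2 * ‖v + G‖ ^ 2 + (f xb - 1 / 2 * ‖G‖ ^ 2) : ℝ) : EReal)
        ≤ g y + ((f y + ‖v‖ ^ 2 : ℝ) : EReal) := by
          exact add_le_add_right (EReal.coe_le_coe_iff.mpr hreal) _
      _ = (f y : EReal) + g y + ((‖v‖ ^ 2 : ℝ) : EReal) := by
          rw [EReal.coe_add]; abel
  calc (f xb : EReal) + g xb
      = (g xb + ((1 / 2 * ‖G‖ ^ 2 : ℝ) : EReal)) + ((f xb - 1 / 2 * ‖G‖ ^ 2 : ℝ) : EReal) := h1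
    _ ≤ (g y + ((1 / 2 * ‖v + G‖ ^ 2 : ℝ) : EReal)) + ((f xb - 1 / 2 * ‖G‖ ^ 2 : ℝ) : EReal) :=
        add_le_add_left hfy _
    _ ≤ (f y : EReal) + g y + ((‖v‖ ^ 2 : ℝ) : EReal) := h2
end

section
/- Let f : ℝ^p → ℝ be C¹ with (1−δ)-Lipschitz gradient and g lower semicontinuous, finite somewhere, with g + ((1−δ)/2)‖·‖² bounded below. For the proximal gradient sequence x_{k+1} ∈ prox_g(x_k − ∇f(x_k)) started at x_0 with g(x_0) < ∞, if the sequence has an accumulation point, then ‖x_{k+1} − x_k‖ → 0 as k → ∞. -/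
open scoped RealInnerProductSpace

lemma descent_lemma {p : ℕ} {L : ℝ} (hL : 0 ≤ L) (f : EuclideanSpace ℝ (Fin p) → ℝ)
    (hf : ContDiff ℝ 1 f)
    (hlip : ∀ a b, ‖gradient f a - gradient f b‖ ≤ L * ‖a - b‖)
    (x y : EuclideanSpace ℝ (Fin p)) :
    f y ≤ f x + ⟪gradient f x, y - x⟫ + L / 2 * ‖y - x‖ ^ 2 := by
  set d := y - x with hd
  set c : ℝ → EuclideanSpace ℝ (Fin p) := fun t => x + t • d with hc
  have hccont : Continuous c := continuous_const.add (continuous_id.smul continuous_const)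
  have hgradcont : Continuous (gradient f) := by
    refine (LipschitzWith.of_dist_le_mul (K := L.toNNReal) ?_).continuous
    intro a b
    simpa [dist_eq_norm, Real.coe_toNNReal L hL] using hlip a b
  have hderiv : ∀ t : ℝ, HasDerivAt (fun t => f (c t)) ⟪gradient f (c t), d⟫ t := by
    intro t
    have hcd : HasDerivAt c d t := by
      simpa [hc] using ((hasDerivAt_id t).smul_const d).const_add x
    have hg : HasGradientAt f (gradient f (c t)) (c t) :=
      (hf.differentiable one_ne_zero (c t)).hasGradientAt
    have := hg.hasFDerivAt.comp_hasDerivAt t hcd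
    exact this.congr_deriv (by simp)
  have hcont : Continuous fun t : ℝ => ⟪gradient f (c t), d⟫ :=
    (hgradcont.comp hccont).inner continuous_const
  have hcont2 : Continuous fun t : ℝ => ⟪gradient f (c t) - gradient f x, d⟫ :=
    ((hgradcont.comp hccont).sub continuous_const).inner continuous_const
  have hint : f y - f x = ∫ t in (0:ℝ)..1, ⟪gradient f (c t), d⟫ := by
    have := intervalIntegral.integral_eq_sub_of_hasDerivAt
      (fun t _ => hderiv t) (hcont.intervalIntegrable 0 1)
    rw [this]
    simp [hc, hd]
  have hsplit : (fun t : ℝ => ⟪gradient f (c t), d⟫)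
      = fun t : ℝ => ⟪gradient f x, d⟫ + ⟪gradient f (c t) - gradient f x, d⟫ := by
    funext t; rw [inner_sub_left]; ring
  have h1 : ∫ t in (0:ℝ)..1, ⟪gradient f (c t), d⟫
      = ⟪gradient f x, d⟫ + ∫ t in (0:ℝ)..1, ⟪gradient f (c t) - gradient f x, d⟫ := by
    rw [hsplit, intervalIntegral.integral_add intervalIntegrable_const
      (hcont2.intervalIntegrable 0 1)]
    simp
  have hcont3 : Continuous fun t : ℝ => L * ‖d‖ ^ 2 * t := by fun_prop
  have hpt : ∀ t ∈ Set.Icc (0:ℝ) 1,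
      ⟪gradient f (c t) - gradient f x, d⟫ ≤ L * ‖d‖ ^ 2 * t := by
    intro t ht
    rcases ht with ⟨ht0, _⟩
    calc ⟪gradient f (c t) - gradient f x, d⟫
        ≤ ‖gradient f (c t) - gradient f x‖ * ‖d‖ := real_inner_le_norm _ _
      _ ≤ (L * ‖c t - x‖) * ‖d‖ := by
          have := hlip (c t) x
          nlinarith [norm_nonneg d]
      _ = L * ‖d‖ ^ 2 * t := by
          have hctx : c t - x = t • d := by simp [hc]
          rw [hctx, norm_smul]
          simp only [Real.norm_eq_abs, abs_of_nonneg ht0]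
          ring
  have h3 := intervalIntegral.integral_mono_on (μ := MeasureTheory.volume) zero_le_one
    (hcont2.intervalIntegrable 0 1) (hcont3.intervalIntegrable 0 1) hpt
  have h2 : ∫ t in (0:ℝ)..1, L * ‖d‖ ^ 2 * t = L / 2 * ‖d‖ ^ 2 := by
    rw [intervalIntegral.integral_const_mul, integral_id]
    ring
  rw [h2] at h3
  linarith [hint, h1, h3, hint ▸ h1]

/-- If the proximal gradient sequence has an accumulation point, then the
increments vanish. -/
theorem stmt9 {p : ℕ} (δ : ℝ) (hδ0 : 0 < δ) (hδ1 : δ < 1)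
    (f : EuclideanSpace ℝ (Fin p) → ℝ) (hf : ContDiff ℝ 1 f)
    (hlip : ∀ a b, ‖gradient f a - gradient f b‖ ≤ (1 - δ) * ‖a - b‖)
    (g : EuclideanSpace ℝ (Fin p) → EReal)
    (hlsc : LowerSemicontinuous g) (hbot : ∀ y, g y ≠ ⊥)
    (hfin : ∃ y, g y ≠ ⊤)
    (hbdd : ∃ B : ℝ, ∀ y,
      (B : EReal) ≤ g y + (((1 - δ) / 2 * ‖y‖ ^ 2 : ℝ) : EReal))
    (x : ℕ → EuclideanSpace ℝ (Fin p)) (hx0 : g (x 0) ≠ ⊤)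
    (hiter : ∀ k, x (k + 1) ∈ proxSet g (x k - gradient f (x k)))
    (hacc : ∃ xb, MapClusterPt xb Filter.atTop x) :
    Filter.Tendsto (fun k => ‖x (k + 1) - x k‖) Filter.atTop (nhds 0) := by
  -- finiteness of g along the iterates
  have hfink : ∀ k, g (x k) ≠ ⊤ := by
    intro k
    induction k with
    | zero => exact hx0
    | succ n ih =>
      intro htop
      have h := hiter n (x n)
      rw [htop] at h
      rw [EReal.top_add_coe] at h
      rw [top_le_iff] at h
      rw [← EReal.coe_toReal ih (hbot (x n)), ← EReal.coe_add] at h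
      exact EReal.coe_ne_top _ h
  set G : ℕ → ℝ := fun k => (g (x k)).toReal with hGdef
  have hG : ∀ k, g (x k) = ((G k : ℝ) : EReal) := fun k =>
    (EReal.coe_toReal (hfink k) (hbot (x k))).symm
  -- key prox inequality in the reals
  have hkey : ∀ k, G (k + 1) + 1 / 2 * ‖x (k + 1) - x k‖ ^ 2
      + ⟪x (k + 1) - x k, gradient f (x k)⟫ ≤ G k := by
    intro k
    have h := hiter k (x k)
    rw [hG k, hG (k + 1), ← EReal.coe_add, ← EReal.coe_add, EReal.coe_le_coe_iff] at h
    have e1 : x (k + 1) - (x k - gradient f (x k))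
        = (x (k + 1) - x k) + gradient f (x k) := by abel
    have e2 : x k - (x k - gradient f (x k)) = gradient f (x k) := by abel
    rw [e1, e2, norm_add_sq_real] at h
    linarith
  -- sufficient decrease
  set F : ℕ → ℝ := fun k => f (x k) + G k with hFdef
  have hdec : ∀ k, F (k + 1) + δ / 2 * ‖x (k + 1) - x k‖ ^ 2 ≤ F k := by
    intro k
    have hdesc := descent_lemma (by linarith : (0:ℝ) ≤ 1 - δ) f hf hlip (x k) (x (k + 1))
    have hk := hkey k
    rw [real_inner_comm] at hk
    simp only [hFdef]
    nlinarith [hdesc, hk]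
  have hanti : Antitone F := by
    apply antitone_nat_of_succ_le
    intro k
    have h1 := hdec k
    have h2 : 0 ≤ δ / 2 * ‖x (k + 1) - x k‖ ^ 2 :=
      mul_nonneg (by linarith) (sq_nonneg _)
    exact le_trans (le_add_of_nonneg_right h2) h1
  -- lower bound from the accumulation point
  obtain ⟨xb, hxb⟩ := hacc
  obtain ⟨ψ, hψmono, hψt⟩ := TopologicalSpace.FirstCountableTopology.tendsto_subseq hxb
  obtain ⟨c, -, hc1⟩ := EReal.exists_between_coe_real (bot_lt_iff_ne_bot.mpr (hbot xb))
  have hflim : Filter.Tendsto (fun j => f (x (ψ j))) Filter.atTop (nhds (f xb)) :=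
    (hf.continuous.tendsto xb).comp hψt
  have hev1 : ∀ᶠ j in Filter.atTop, c < G (ψ j) := by
    have := hψt.eventually (hlsc xb c hc1)
    filter_upwards [this] with j hj
    simp only [Function.comp_apply] at hj
    rw [hG (ψ j), gt_iff_lt, EReal.coe_lt_coe_iff] at hj
    exact hj
  have hev2 : ∀ᶠ j in Filter.atTop, f xb - 1 < f (x (ψ j)) := by
    have : Set.Ioi (f xb - 1) ∈ nhds (f xb) := Ioi_mem_nhds (by linarith)
    exact hflim.eventually this
  have hbddF : ∀ k, f xb - 1 + c ≤ F k := by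
    intro k
    obtain ⟨j0, hj0⟩ := (hev1.and hev2).exists_forall_of_atTop
    have hj : ψ (max j0 k) ≥ k := le_trans (le_max_right j0 k) (hψmono.le_apply)
    have hprop := hj0 (max j0 k) (le_max_left j0 k)
    have := hanti hj
    simp only [hFdef] at this ⊢
    have := hanti hj
    calc f xb - 1 + c ≤ f (x (ψ (max j0 k))) + G (ψ (max j0 k)) := by
          have := hprop.1; have := hprop.2; linarith
      _ ≤ f (x k) + G k := hanti hj
  -- convergence of F and conclusion
  have hbb : BddBelow (Set.range F) := ⟨f xb - 1 + c, by rintro _ ⟨k, rfl⟩; exact hbddF k⟩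
  have hFlim := tendsto_atTop_ciInf hanti hbb
  have hdiff : Filter.Tendsto (fun k => F k - F (k + 1)) Filter.atTop (nhds 0) := by
    have h2 : Filter.Tendsto (fun k => F (k + 1)) Filter.atTop
        (nhds (⨅ i, F i)) := hFlim.comp (Filter.tendsto_add_atTop_nat 1)
    simpa using hFlim.sub h2
  have hsq : Filter.Tendsto (fun k => ‖x (k + 1) - x k‖ ^ 2) Filter.atTop (nhds 0) := by
    have hup : Filter.Tendsto (fun k => 2 / δ * (F k - F (k + 1))) Filter.atTop (nhds 0) := by
      simpa using hdiff.const_mul (2 / δ)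
    refine tendsto_of_tendsto_of_tendsto_of_le_of_le tendsto_const_nhds hup
      (fun k => sq_nonneg _) ?_
    intro k
    have h2 : δ / 2 * ‖x (k + 1) - x k‖ ^ 2 ≤ F k - F (k + 1) := by linarith [hdec k]
    calc ‖x (k + 1) - x k‖ ^ 2 = 2 / δ * (δ / 2 * ‖x (k + 1) - x k‖ ^ 2) := by
          field_simp
      _ ≤ 2 / δ * (F k - F (k + 1)) :=
          mul_le_mul_of_nonneg_left h2 (by positivity)
  have hsqrt := (Real.continuous_sqrt.tendsto 0).comp hsq
  rw [Real.sqrt_zero] at hsqrt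
  exact hsqrt.congr fun k => Real.sqrt_sq (norm_nonneg _)
end

section
/- Let f : ℝ^p → ℝ be C¹ with L-Lipschitz gradient, C ⊆ ℝ^p nonempty and closed, and let 0 < γ < 1/L. If x̄ ∈ C satisfies x̄ ∈ proj_C(x̄ − γ∇f(x̄)), then for all y ∈ C: f(y) ≥ f(x̄) − (1/γ)‖y − x̄‖². -/
open scoped RealInnerProductSpace

/-- Descent lemma: quadratic lower bound for a C¹ function with Lipschitz gradient. -/
lemma descent_aux {p : ℕ} (L : ℝ)
    (f : EuclideanSpace ℝ (Fin p) → ℝ) (hf : ContDiff ℝ 1 f)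
    (hlip : ∀ a b, ‖gradient f a - gradient f b‖ ≤ L * ‖a - b‖)
    (x y : EuclideanSpace ℝ (Fin p)) :
    f x + ⟪gradient f x, y - x⟫ - L / 2 * ‖y - x‖ ^ 2 ≤ f y := by
  set v := y - x with hv
  set c : ℝ → EuclideanSpace ℝ (Fin p) := fun t => x + t • v with hc
  have hdiff : Differentiable ℝ f := hf.differentiable one_ne_zero
  have hct : ∀ t : ℝ, HasDerivAt c v t := fun t => by
    simpa [c] using ((hasDerivAt_id t).smul_const v).const_add x
  set φ : ℝ → ℝ := fun t => ⟪gradient f (c t), v⟫ with hφ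
  have hgc : Continuous (gradient f) := by
    have h1 : Continuous (fderiv ℝ f) := hf.continuous_fderiv one_ne_zero
    have : gradient f = fun z =>
        (InnerProductSpace.toDual ℝ (EuclideanSpace ℝ (Fin p))).symm (fderiv ℝ f z) := rfl
    rw [this]
    exact (InnerProductSpace.toDual ℝ (EuclideanSpace ℝ (Fin p))).symm.continuous.comp h1
  have hφc : Continuous φ := by
    apply Continuous.inner
    · exact hgc.comp (by continuity)
    · exact continuous_const
  have hderiv : ∀ t : ℝ, HasDerivAt (fun t => f (c t)) (φ t) t := by
    intro t
    have hg : HasGradientAt f (gradient f (c t)) (c t) :=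
      (hdiff (c t)).hasGradientAt
    have hfd : HasFDerivAt f
        (InnerProductSpace.toDual ℝ _ (gradient f (c t))) (c t) := hg
    have := hfd.comp_hasDerivAt t (hct t)
    simpa [φ, Function.comp_def, InnerProductSpace.toDual_apply_apply] using this
  have hint : ∫ t in (0:ℝ)..1, φ t = f (c 1) - f (c 0) :=
    intervalIntegral.integral_eq_sub_of_hasDerivAt
      (fun t _ => hderiv t) (hφc.intervalIntegrable 0 1)
  have hc0 : c 0 = x := by simp [c]
  have hc1 : c 1 = y := by simp [c, v]
  have hbound : ∀ t ∈ Set.Icc (0:ℝ) 1,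
      ⟪gradient f x, v⟫ - L * t * ‖v‖ ^ 2 ≤ φ t := by
    intro t ht
    have h1 : |⟪gradient f (c t) - gradient f x, v⟫| ≤
        ‖gradient f (c t) - gradient f x‖ * ‖v‖ := abs_real_inner_le_norm _ _
    have h3 : ‖c t - x‖ = t * ‖v‖ := by
      have : c t - x = t • v := by simp [c]
      rw [this, norm_smul, Real.norm_eq_abs, abs_of_nonneg ht.1]
    have h2 : ‖gradient f (c t) - gradient f x‖ ≤ L * (t * ‖v‖) := by
      have := hlip (c t) x; rw [h3] at this; linarith
    have hA : |⟪gradient f (c t) - gradient f x, v⟫| ≤ L * t * ‖v‖ ^ 2 := by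
      calc |⟪gradient f (c t) - gradient f x, v⟫| ≤
          ‖gradient f (c t) - gradient f x‖ * ‖v‖ := h1
        _ ≤ (L * (t * ‖v‖)) * ‖v‖ := mul_le_mul_of_nonneg_right h2 (norm_nonneg v)
        _ = L * t * ‖v‖ ^ 2 := by ring
    have h5 : φ t = ⟪gradient f x, v⟫ + ⟪gradient f (c t) - gradient f x, v⟫ := by
      simp [φ, inner_sub_left]
    have := neg_abs_le ⟪gradient f (c t) - gradient f x, v⟫
    linarith
  have hlow : ∫ t in (0:ℝ)..1, (⟪gradient f x, v⟫ - L * t * ‖v‖ ^ 2) ≤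
      ∫ t in (0:ℝ)..1, φ t := by
    apply intervalIntegral.integral_mono_on zero_le_one
    · exact ((continuous_const.sub
        ((continuous_const.mul continuous_id).mul continuous_const)).intervalIntegrable 0 1)
    · exact hφc.intervalIntegrable 0 1
    · exact hbound
  have hval : ∫ t in (0:ℝ)..1, (⟪gradient f x, v⟫ - L * t * ‖v‖ ^ 2) =
      ⟪gradient f x, v⟫ - L / 2 * ‖v‖ ^ 2 := by
    have heq : (fun t : ℝ => ⟪gradient f x, v⟫ - L * t * ‖v‖ ^ 2) =
        fun t : ℝ => ⟪gradient f x, v⟫ + (-(L * ‖v‖ ^ 2)) * t := by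
      ext t; ring
    have hadd : ∫ t in (0:ℝ)..1, (⟪gradient f x, v⟫ + (-(L * ‖v‖ ^ 2)) * t) =
        (∫ _t in (0:ℝ)..1, ⟪gradient f x, v⟫) +
        ∫ t in (0:ℝ)..1, (-(L * ‖v‖ ^ 2)) * t :=
      intervalIntegral.integral_add (intervalIntegrable_const)
        ((continuous_const.mul continuous_id).intervalIntegrable 0 1)
    have hmul : ∫ t in (0:ℝ)..1, (-(L * ‖v‖ ^ 2)) * t =
        (-(L * ‖v‖ ^ 2)) * ∫ t in (0:ℝ)..1, t :=
      intervalIntegral.integral_const_mul _ _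
    rw [heq, hadd, hmul, integral_id]
    simp only [intervalIntegral.integral_const, smul_eq_mul]
    ring
  rw [hint, hc0, hc1] at hlow
  rw [hval] at hlow
  linarith

/-- Quadratic global lower estimate at a fixed point of the projected gradient map. -/
theorem stmt10 {p : ℕ} (L γ : ℝ) (hL : 0 < L) (hγ : 0 < γ) (hγL : γ < 1 / L)
    (f : EuclideanSpace ℝ (Fin p) → ℝ) (hf : ContDiff ℝ 1 f)
    (hlip : ∀ a b, ‖gradient f a - gradient f b‖ ≤ L * ‖a - b‖)
    (C : Set (EuclideanSpace ℝ (Fin p))) (hCne : C.Nonempty) (hCcl : IsClosed C)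
    (xb : EuclideanSpace ℝ (Fin p)) (hxb : xb ∈ C)
    (hfix : ∀ y ∈ C, ‖(xb - γ • gradient f xb) - xb‖ ≤ ‖(xb - γ • gradient f xb) - y‖) :
    ∀ y ∈ C, f xb - (1 / γ) * ‖y - xb‖ ^ 2 ≤ f y := by
  intro y hy
  set g := gradient f xb with hg
  have hdesc := descent_aux L f hf hlip xb y
  have hfy := hfix y hy
  have hlhs : ‖(xb - γ • g) - xb‖ = γ * ‖g‖ := by
    have : (xb - γ • g) - xb = -(γ • g) := by abel
    rw [this, norm_neg, norm_smul, Real.norm_eq_abs, abs_of_pos hγ]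
  have hrhs : (xb - γ • g) - y = (xb - y) - γ • g := by abel
  have hsq : (γ * ‖g‖) ^ 2 ≤ ‖(xb - y) - γ • g‖ ^ 2 := by
    rw [hlhs, hrhs] at hfy
    exact pow_le_pow_left₀ (by positivity) hfy 2
  have hexp : ‖(xb - y) - γ • g‖ ^ 2 =
      ‖xb - y‖ ^ 2 - 2 * (γ * ⟪xb - y, g⟫) + (γ * ‖g‖) ^ 2 := by
    rw [norm_sub_sq_real, real_inner_smul_right, norm_smul, Real.norm_eq_abs,
      abs_of_pos hγ]
  have h1 : 2 * (γ * ⟪xb - y, g⟫) ≤ ‖xb - y‖ ^ 2 := by nlinarith [hsq, hexp]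
  set n := ‖y - xb‖ ^ 2 with hn
  set I : ℝ := ⟪g, y - xb⟫ with hI
  have hIeq : I = -⟪xb - y, g⟫ := by
    rw [hI, real_inner_comm, show y - xb = -(xb - y) by abel, inner_neg_left]
  have h3 : ‖xb - y‖ = ‖y - xb‖ := norm_sub_rev _ _
  have hinner' : -n ≤ 2 * γ * I := by
    rw [hIeq, hn, ← h3]; linarith
  have hn2 : (0:ℝ) ≤ n := by rw [hn]; positivity
  have hLγ' : L * γ < 1 := by
    have := (lt_div_iff₀ hL).mp hγL; linarith
  have f2 : L * γ * n ≤ n := by nlinarith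
  have step : (L / 2) * n - I ≤ (1 / γ) * n := by
    rw [one_div, inv_mul_eq_div, le_div_iff₀ hγ]
    nlinarith [hinner', f2]
  have hdesc' : f xb + I - L / 2 * n ≤ f y := by
    simpa [hI, hn] using hdesc
  linarith
end

section
/- Let C ⊆ ℝ^p be nonempty and closed, f : ℝ^p → ℝ be C¹, and x̄ ∈ C satisfy x̄ ∈ proj_C(x̄ − γ∇f(x̄)) for some γ > 0. Then for every s with 0 < s < γ, the projection of x̄ − s∇f(x̄) onto C is the singleton {x̄}. -/
/-- At a fixed point of the projected gradient map with step `γ`, the projection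
with any smaller step `s` is the singleton `{x̄}`. -/
theorem stmt11 {p : ℕ} (γ : ℝ) (hγ : 0 < γ)
    (f : EuclideanSpace ℝ (Fin p) → ℝ) (hf : ContDiff ℝ 1 f)
    (C : Set (EuclideanSpace ℝ (Fin p))) (hCne : C.Nonempty) (hCcl : IsClosed C)
    (xb : EuclideanSpace ℝ (Fin p)) (hxb : xb ∈ C)
    (hfix : ∀ y ∈ C, ‖(xb - γ • gradient f xb) - xb‖ ≤ ‖(xb - γ • gradient f xb) - y‖) :
    ∀ s : ℝ, 0 < s → s < γ →
      {w | w ∈ C ∧ ∀ y ∈ C,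
          ‖(xb - s • gradient f xb) - w‖ ≤ ‖(xb - s • gradient f xb) - y‖} = {xb} := by
  intro s hs hsγ
  set g := gradient f xb with hg
  have hrw : ∀ (t : ℝ) (y : EuclideanSpace ℝ (Fin p)),
      (xb - t • g) - y = (xb - y) - t • g := by
    intro t y; abel
  have hnorm : ∀ (t : ℝ) (y : EuclideanSpace ℝ (Fin p)),
      ‖(xb - y) - t • g‖ ^ 2
        = ‖xb - y‖ ^ 2 - 2 * t * inner ℝ (xb - y) g + t ^ 2 * ‖g‖ ^ 2 := by
    intro t y
    rw [norm_sub_sq_real, real_inner_smul_right, norm_smul]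
    ring_nf
    rw [Real.norm_eq_abs, sq_abs]
  have key : ∀ y ∈ C, 2 * γ * inner ℝ (xb - y) g ≤ ‖xb - y‖ ^ 2 := by
    intro y hy
    have h := hfix y hy
    rw [hrw, hrw] at h
    have h1 : ‖(xb - xb) - γ • g‖ = γ * ‖g‖ := by
      simp [norm_smul, abs_of_pos hγ]
    rw [h1] at h
    have h2 : (γ * ‖g‖) ^ 2 ≤ ‖(xb - y) - γ • g‖ ^ 2 :=
      pow_le_pow_left₀ (by positivity) h 2
    rw [hnorm] at h2
    nlinarith [sq_nonneg ‖g‖]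
  ext w
  simp only [Set.mem_setOf_eq, Set.mem_singleton_iff]
  constructor
  · rintro ⟨hwC, hw⟩
    have h := hw xb hxb
    rw [hrw, hrw] at h
    have h1 : ‖(xb - xb) - s • g‖ = s * ‖g‖ := by
      simp [norm_smul, abs_of_pos hs]
    rw [h1] at h
    have h2 : ‖(xb - w) - s • g‖ ^ 2 ≤ (s * ‖g‖) ^ 2 :=
      pow_le_pow_left₀ (by positivity) h 2
    rw [hnorm] at h2
    have hk := key w hwC
    have hzero : ‖xb - w‖ ^ 2 ≤ 0 := by nlinarith
    have : ‖xb - w‖ = 0 := by nlinarith [norm_nonneg (xb - w)]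
    have : xb - w = 0 := norm_eq_zero.mp this
    have : xb = w := by
      have := sub_eq_zero.mp this; exact this
    exact this.symm
  · intro hwx
    subst w
    refine ⟨hxb, fun y hy => ?_⟩
    rw [hrw, hrw]
    have h1 : ‖(xb - xb) - s • g‖ = s * ‖g‖ := by
      simp [norm_smul, abs_of_pos hs]
    rw [h1]
    have hk := key y hy
    have h2 : (s * ‖g‖) ^ 2 ≤ ‖(xb - y) - s • g‖ ^ 2 := by
      rw [hnorm]
      rcases le_or_gt (inner ℝ (xb - y) g : ℝ) 0 with h | h
      · nlinarith [sq_nonneg ‖xb - y‖]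
      · nlinarith
    have := Real.sqrt_le_sqrt h2
    rwa [Real.sqrt_sq (by positivity), Real.sqrt_sq (norm_nonneg _)] at this
end
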